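/- Let d ∈ ℕ, d ≥ 1, 1 ≤ p, q < ∞, r ∈ ℕ, δ ≥ 0, and let f ∈ Λ^{p,q}. Then the averaged modulus of smoothness is finite: τ_r(f; δ; ℝ×ℝ^d)_{p,q} < ∞. -/

import Mathlib

open MeasureTheory Filter Set Asymptotics
open scoped ENNReal NNReal

noncomputable section

/-- An admissible partition of `ℝ × ℝ^d`: strictly increasing doubly-infinite sequences of
nodes in the first variable and in each of the `d` remaining variables, whose consecutive
gaps are bounded below by a positive constant `Δlo` and above by a finite constant `Δhi`. -/
structure AdmissiblePartition (d : ℕ) where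
  /-- nodes in the first variable -/
  x : ℤ → ℝ
  /-- nodes in the `i`-th of the remaining `d` variables -/
  y : Fin d → ℤ → ℝ
  /-- a lower mesh bound -/
  Δlo : ℝ
  /-- an upper mesh bound -/
  Δhi : ℝ
  Δlo_pos : 0 < Δlo
  xgap_lo : ∀ k : ℤ, Δlo ≤ x k - x (k - 1)
  xgap_hi : ∀ k : ℤ, x k - x (k - 1) ≤ Δhi
  ygap_lo : ∀ i, ∀ j : ℤ, Δlo ≤ y i j - y i (j - 1)
  ygap_hi : ∀ i, ∀ j : ℤ, y i j - y i (j - 1) ≤ Δhi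

/-- The half-open cell `Q_{jk} = [x_{k-1}, x_k) × ∏ i, [y_{i,jᵢ-1}, y_{i,jᵢ})` of an
admissible partition. -/
def cell {d : ℕ} (P : AdmissiblePartition d) (k : ℤ) (j : Fin d → ℤ) :
    Set (ℝ × (Fin d → ℝ)) :=
  {z | z.1 ∈ Set.Ico (P.x (k - 1)) (P.x k) ∧
    ∀ i, z.2 i ∈ Set.Ico (P.y i (j i - 1)) (P.y i (j i))}

/-- The volume `Δ_{jk}` of the cell `Q_{jk}`. -/
def cellVol {d : ℕ} (P : AdmissiblePartition d) (k : ℤ) (j : Fin d → ℤ) : ℝ :=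
  (P.x k - P.x (k - 1)) * ∏ i, (P.y i (j i) - P.y i (j i - 1))

/-- The discrete mixed `ℓ^{p,q}(Σ)` norm of `f : ℝ × ℝ^d → ℂ` with respect to an
admissible partition:
`‖f‖ = (∑_k (∑_j sup_{Q_{jk}} |f|^q · Δ_{jk})^{p/q})^{1/p}` (valued in `ℝ≥0∞`). -/
def discNorm (d : ℕ) (p q : ℝ) (P : AdmissiblePartition d)
    (f : ℝ × (Fin d → ℝ) → ℂ) : ℝ≥0∞ :=
  (∑' k : ℤ, (∑' j : Fin d → ℤ,
      (⨆ z ∈ cell P k j, ENNReal.ofReal ‖f z‖) ^ q *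
        ENNReal.ofReal (cellVol P k j)) ^ (p / q)) ^ (1 / p)

/-- Membership in `Λ^{p,q}`: `f` is measurable and has finite discrete mixed norm with
respect to every admissible partition. -/
def MemLambda (d : ℕ) (p q : ℝ) (f : ℝ × (Fin d → ℝ) → ℂ) : Prop :=
  Measurable f ∧ ∀ P : AdmissiblePartition d, discNorm d p q P f < ⊤

/-- The `r`-th finite difference of `f : ℝ × ℝ^d → ℂ` with step `h` in every coordinate. -/
def fdiffC (d r : ℕ) (h : ℝ) (f : ℝ × (Fin d → ℝ) → ℂ) (z : ℝ × (Fin d → ℝ)) : ℂ :=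
  ∑ j ∈ Finset.range (r + 1),
    ((-1 : ℂ) ^ (r - j) * (r.choose j : ℂ)) * f (z.1 + j * h, fun i => z.2 i + j * h)

/-- The local modulus of smoothness of order `r` of `f : ℝ × ℝ^d → ℂ` on all of
`ℝ × ℝ^d` at the point `z`, for `δ ≥ 0` (valued in `ℝ≥0∞`). -/
def locModC (d r : ℕ) (f : ℝ × (Fin d → ℝ) → ℂ) (δ : ℝ) (z : ℝ × (Fin d → ℝ)) : ℝ≥0∞ :=
  ⨆ (h : ℝ) (t : ℝ) (s : Fin d → ℝ)
    (_ : t ∈ Set.Icc (z.1 - r * δ / 2) (z.1 + r * δ / 2))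
    (_ : t + r * h ∈ Set.Icc (z.1 - r * δ / 2) (z.1 + r * δ / 2))
    (_ : ∀ i, s i ∈ Set.Icc (z.2 i - r * δ / 2) (z.2 i + r * δ / 2))
    (_ : ∀ i, s i + r * h ∈ Set.Icc (z.2 i - r * δ / 2) (z.2 i + r * δ / 2)),
    ENNReal.ofReal ‖fdiffC d r h f (t, s)‖

/-- The `L^{p,q}`-averaged modulus of smoothness of order `r` of `f : ℝ × ℝ^d → ℂ`:
`τ_r(f;δ;ℝ×ℝ^d)_{p,q} = ‖ω_r(f,·;δ)‖_{L^{p,q}}`. -/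
def tauModC (d r : ℕ) (p q : ℝ) (f : ℝ × (Fin d → ℝ) → ℂ) (δ : ℝ) : ℝ≥0∞ :=
  (∫⁻ x : ℝ, (∫⁻ y : Fin d → ℝ, (locModC d r f δ (x, y)) ^ q) ^ (p / q)) ^ (1 / p)
section TauAuxSection

open Finset

private lemma sum_rpow_le {ι : Type*} (t : Finset ι) (g : ι → ℝ≥0∞) {α : ℝ} (hα : 0 < α) :
    (∑ i ∈ t, g i) ^ α ≤ (t.card : ℝ≥0∞) ^ α * ∑ i ∈ t, g i ^ α := by
  rcases t.eq_empty_or_nonempty with h | h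
  · simp [h, ENNReal.zero_rpow_of_pos hα]
  · obtain ⟨i0, hi0, hsup⟩ := Finset.exists_mem_eq_sup t h g
    calc (∑ i ∈ t, g i) ^ α ≤ ((t.card : ℝ≥0∞) * g i0) ^ α := by
          refine ENNReal.rpow_le_rpow ?_ hα.le
          have h1 := Finset.sum_le_card_nsmul t g (g i0)
            (fun i hi => hsup ▸ Finset.le_sup hi)
          simpa [nsmul_eq_mul] using h1
      _ = (t.card : ℝ≥0∞) ^ α * (g i0) ^ α := ENNReal.mul_rpow_of_nonneg _ _ hα.le
      _ ≤ (t.card : ℝ≥0∞) ^ α * ∑ i ∈ t, g i ^ α :=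
          mul_le_mul_right (Finset.single_le_sum (f := fun i => g i ^ α) (fun _ _ => zero_le) hi0) _

private lemma lintegral_le_cellbound {α ι : Type*} [MeasurableSpace α]
    (μ : MeasureTheory.Measure α) [Countable ι] (g : α → ℝ≥0∞) (c : ι → ℝ≥0∞)
    (Y : ι → Set α) (hY : ∀ i, MeasurableSet (Y i))
    (hcov : ∀ a, ∃ i, a ∈ Y i ∧ g a ≤ c i) :
    ∫⁻ a, g a ∂μ ≤ ∑' i, c i * μ (Y i) := by
  calc ∫⁻ a, g a ∂μ ≤ ∫⁻ a, ∑' i, (Y i).indicator (fun _ => c i) a ∂μ := by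
        refine lintegral_mono fun a => ?_
        obtain ⟨i, hi, hgi⟩ := hcov a
        refine le_trans ?_ (ENNReal.le_tsum i)
        rwa [Set.indicator_of_mem hi]
    _ = ∑' i, ∫⁻ a, (Y i).indicator (fun _ => c i) a ∂μ :=
        lintegral_tsum fun i => (measurable_const.indicator (hY i)).aemeasurable
    _ = ∑' i, c i * μ (Y i) :=
        tsum_congr fun i => lintegral_indicator_const (hY i) (c i)

private def idx (L u : ℝ) : ℤ := ⌊u / L⌋ + 1

private lemma idx_left {L : ℝ} (hL : 0 < L) (u : ℝ) : ((idx L u - 1 : ℤ) : ℝ) * L ≤ u := by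
  have h := Int.floor_le (u / L)
  have h2 : ((idx L u - 1 : ℤ) : ℝ) = (⌊u / L⌋ : ℝ) := by simp [idx]
  rw [h2]
  calc (⌊u / L⌋ : ℝ) * L ≤ (u / L) * L := mul_le_mul_of_nonneg_right h hL.le
    _ = u := div_mul_cancel₀ u hL.ne'

private lemma idx_right {L : ℝ} (hL : 0 < L) (u : ℝ) : u < ((idx L u : ℤ) : ℝ) * L := by
  have h := Int.lt_floor_add_one (u / L)
  have h2 : ((idx L u : ℤ) : ℝ) = (⌊u / L⌋ : ℝ) + 1 := by push_cast [idx]; ring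
  rw [h2]
  calc u = (u / L) * L := (div_mul_cancel₀ u hL.ne').symm
    _ < ((⌊u / L⌋ : ℝ) + 1) * L := mul_lt_mul_of_pos_right h hL

private lemma idx_close {L : ℝ} (hL : 0 < L) {u v : ℝ} (h : |u - v| ≤ L) :
    idx L u - idx L v ∈ ({-1, 0, 1} : Finset ℤ) := by
  rw [abs_le] at h
  have hvL : v / L * L = v := div_mul_cancel₀ v hL.ne'
  have h1 : u / L ≤ v / L + 1 := by rw [div_le_iff₀ hL]; nlinarith
  have h2 : v / L - 1 ≤ u / L := by rw [le_div_iff₀ hL]; nlinarith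
  have h3 : ⌊u / L⌋ ≤ ⌊v / L⌋ + 1 := by
    have h3' : ⌊u / L⌋ ≤ ⌊v / L + ((1:ℤ):ℝ)⌋ := Int.floor_le_floor (by push_cast; linarith)
    rwa [Int.floor_add_intCast] at h3'
  have h4 : ⌊v / L⌋ - 1 ≤ ⌊u / L⌋ := by
    have h4' : ⌊v / L - ((1:ℤ):ℝ)⌋ ≤ ⌊u / L⌋ := Int.floor_le_floor (by push_cast; linarith)
    rwa [Int.floor_sub_intCast] at h4'
  simp only [idx, Finset.mem_insert, Finset.mem_singleton]
  omega

private lemma step_mem {a b t h c R : ℝ} (hc0 : 0 ≤ c) (hcr : c ≤ R)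
    (h1 : a ≤ t) (h2 : t ≤ b) (h3 : a ≤ t + R * h) (h4 : t + R * h ≤ b) :
    a ≤ t + c * h ∧ t + c * h ≤ b := by
  rcases le_total 0 h with hh | hh
  · exact ⟨by nlinarith [mul_nonneg hc0 hh], by nlinarith [mul_nonneg (sub_nonneg.mpr hcr) hh]⟩
  · exact ⟨by nlinarith [mul_nonpos_of_nonneg_of_nonpos (sub_nonneg.mpr hcr) hh],
      by nlinarith [mul_nonpos_of_nonneg_of_nonpos hc0 hh]⟩

end TauAuxSection
section TauAuxSection2

private def unifP (d : ℕ) {L : ℝ} (hL : 0 < L) : AdmissiblePartition d where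
  x := fun k => (k : ℝ) * L
  y := fun _ k => (k : ℝ) * L
  Δlo := L
  Δhi := L
  Δlo_pos := hL
  xgap_lo := fun k => le_of_eq (by push_cast; ring)
  xgap_hi := fun k => le_of_eq (by push_cast; ring)
  ygap_lo := fun _ k => le_of_eq (by push_cast; ring)
  ygap_hi := fun _ k => le_of_eq (by push_cast; ring)

private def Eset : Finset ℤ := {-1, 0, 1}

private def EsetPi (d : ℕ) : Finset (Fin d → ℤ) := Fintype.piFinset fun _ => Eset

private def cellSup {d : ℕ} (P : AdmissiblePartition d) (f : ℝ × (Fin d → ℝ) → ℂ)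
    (k : ℤ) (j : Fin d → ℤ) : ℝ≥0∞ :=
  ⨆ z ∈ cell P k j, ENNReal.ofReal ‖f z‖

private def nbSum {d : ℕ} (f : ℝ × (Fin d → ℝ) → ℂ) (r : ℕ) {L : ℝ} (hL : 0 < L)
    (k : ℤ) (j : Fin d → ℤ) : ℝ≥0∞ :=
  (2 : ℝ≥0∞) ^ r * ∑ e ∈ Eset, ∑ η ∈ EsetPi d,
    cellSup (unifP d hL) f (k + e) (fun i => j i + η i)

private lemma mem_cell_idx {d : ℕ} {L : ℝ} (hL : 0 < L) (w : ℝ × (Fin d → ℝ)) :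
    w ∈ cell (unifP d hL) (idx L w.1) (fun i => idx L (w.2 i)) := by
  simp only [cell, Set.mem_setOf_eq, Set.mem_Ico, unifP]
  exact ⟨⟨idx_left hL w.1, idx_right hL w.1⟩,
    fun i => ⟨idx_left hL (w.2 i), idx_right hL (w.2 i)⟩⟩

set_option maxHeartbeats 2000000 in
private lemma locModC_le_nbSum {d : ℕ} (r : ℕ) {δ L : ℝ}
    (hρ : (r : ℝ) * δ / 2 ≤ L) (hL : 0 < L)
    (f : ℝ × (Fin d → ℝ) → ℂ) (z : ℝ × (Fin d → ℝ)) :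
    locModC d r f δ z ≤ nbSum f r hL (idx L z.1) (fun i => idx L (z.2 i)) := by
  refine iSup_le fun h => iSup_le fun t => iSup_le fun s => iSup_le fun ht1 =>
    iSup_le fun ht2 => iSup_le fun hs1 => iSup_le fun hs2 => ?_
  rw [Set.mem_Icc] at ht1 ht2
  simp only [Set.mem_Icc] at hs1 hs2
  set B0 : ℝ≥0∞ := ∑ e ∈ Eset, ∑ η ∈ EsetPi d,
    cellSup (unifP d hL) f (idx L z.1 + e) (fun i => idx L (z.2 i) + η i) with hB0
  have key : ∀ c ∈ Finset.range (r + 1),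
      ENNReal.ofReal ‖f (t + (c : ℝ) * h, fun i => s i + (c : ℝ) * h)‖ ≤ B0 := by
    intro c hc
    have hc0 : (0:ℝ) ≤ (c : ℝ) := Nat.cast_nonneg c
    have hcr : (c : ℝ) ≤ (r : ℝ) := by
      exact_mod_cast Nat.lt_succ_iff.mp (Finset.mem_range.mp hc)
    have hx1 := step_mem hc0 hcr ht1.1 ht1.2 ht2.1 ht2.2
    have hy1 : ∀ i, z.2 i - (r:ℝ) * δ / 2 ≤ s i + (c:ℝ) * h ∧
        s i + (c:ℝ) * h ≤ z.2 i + (r:ℝ) * δ / 2 :=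
      fun i => step_mem hc0 hcr (hs1 i).1 (hs1 i).2 (hs2 i).1 (hs2 i).2
    have hxc : |(t + (c:ℝ) * h) - z.1| ≤ L :=
      abs_le.mpr ⟨by linarith [hx1.1], by linarith [hx1.2]⟩
    have hyc : ∀ i, |(s i + (c:ℝ) * h) - z.2 i| ≤ L :=
      fun i => abs_le.mpr ⟨by linarith [(hy1 i).1], by linarith [(hy1 i).2]⟩
    have hmem := mem_cell_idx (d := d) hL (t + (c:ℝ) * h, fun i => s i + (c:ℝ) * h)
    have h1 : ENNReal.ofReal ‖f (t + (c:ℝ) * h, fun i => s i + (c:ℝ) * h)‖ ≤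
        cellSup (unifP d hL) f (idx L (t + (c:ℝ) * h)) (fun i => idx L (s i + (c:ℝ) * h)) :=
      le_iSup₂ (f := fun z (_ : z ∈ cell (unifP d hL) (idx L (t + (c:ℝ) * h))
        (fun i => idx L (s i + (c:ℝ) * h))) => ENNReal.ofReal ‖f z‖) _ hmem
    have he : idx L (t + (c:ℝ) * h) - idx L z.1 ∈ Eset := idx_close hL hxc
    have hη : (fun i => idx L (s i + (c:ℝ) * h) - idx L (z.2 i)) ∈ EsetPi d := by
      rw [EsetPi, Fintype.mem_piFinset]
      exact fun i => idx_close hL (hyc i)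
    have e1 : idx L z.1 + (idx L (t + (c:ℝ) * h) - idx L z.1) = idx L (t + (c:ℝ) * h) := by ring
    have e2 : (fun i => idx L (z.2 i) + (idx L (s i + (c:ℝ) * h) - idx L (z.2 i)))
        = fun i => idx L (s i + (c:ℝ) * h) := by funext i; ring
    have h2 : cellSup (unifP d hL) f (idx L (t + (c:ℝ) * h))
        (fun i => idx L (s i + (c:ℝ) * h)) ≤ B0 := by
      have s1 := Finset.single_le_sum (f := fun η => cellSup (unifP d hL) f
        (idx L z.1 + (idx L (t + (c:ℝ) * h) - idx L z.1))
        (fun i => idx L (z.2 i) + η i)) (fun _ _ => zero_le) hη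
      have s2 := Finset.single_le_sum (f := fun e => ∑ η ∈ EsetPi d, cellSup (unifP d hL) f
        (idx L z.1 + e) (fun i => idx L (z.2 i) + η i)) (fun _ _ => zero_le) he
      refine le_trans (le_of_eq ?_) (s1.trans s2)
      simp only [e1, e2]
    exact h1.trans h2
  have hn : ‖fdiffC d r h f (t, s)‖ ≤
      ∑ c ∈ Finset.range (r + 1), (r.choose c : ℝ) *
        ‖f (t + (c:ℝ) * h, fun i => s i + (c:ℝ) * h)‖ := by
    simp only [fdiffC]
    refine (norm_sum_le _ _).trans (le_of_eq (Finset.sum_congr rfl fun c _ => ?_))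
    simp [norm_mul, norm_pow]
  calc ENNReal.ofReal ‖fdiffC d r h f (t, s)‖
      ≤ ENNReal.ofReal (∑ c ∈ Finset.range (r + 1), (r.choose c : ℝ) *
          ‖f (t + (c:ℝ) * h, fun i => s i + (c:ℝ) * h)‖) := ENNReal.ofReal_le_ofReal hn
    _ = ∑ c ∈ Finset.range (r + 1), ENNReal.ofReal ((r.choose c : ℝ) *
          ‖f (t + (c:ℝ) * h, fun i => s i + (c:ℝ) * h)‖) :=
        ENNReal.ofReal_sum_of_nonneg fun c _ => by positivity
    _ = ∑ c ∈ Finset.range (r + 1), (r.choose c : ℝ≥0∞) *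
          ENNReal.ofReal ‖f (t + (c:ℝ) * h, fun i => s i + (c:ℝ) * h)‖ :=
        Finset.sum_congr rfl fun c _ => by
          rw [ENNReal.ofReal_mul (by positivity), ENNReal.ofReal_natCast]
    _ ≤ ∑ c ∈ Finset.range (r + 1), (r.choose c : ℝ≥0∞) * B0 :=
        Finset.sum_le_sum fun c hc => mul_le_mul_right (key c hc) _
    _ = (2 : ℝ≥0∞) ^ r * B0 := by
        rw [← Finset.sum_mul, ← Nat.cast_sum, Nat.sum_range_choose]
        push_cast
        ring
    _ = nbSum f r hL (idx L z.1) (fun i => idx L (z.2 i)) := by rw [hB0]; rfl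

end TauAuxSection2
section TauAuxSection3

private lemma cellVol_unifP {d : ℕ} {L : ℝ} (hL : 0 < L) (k : ℤ) (j : Fin d → ℤ) :
    cellVol (unifP d hL) k j = L ^ (d + 1) := by
  have h1 : ∀ m : ℤ, ((m : ℤ) : ℝ) * L - (((m - 1 : ℤ)) : ℝ) * L = L := fun m => by
    push_cast; ring
  simp only [cellVol, unifP, h1]
  rw [Finset.prod_const, Finset.card_univ, Fintype.card_fin, pow_succ]
  ring

private lemma U_lt_top {d : ℕ} {p q : ℝ} (hp0 : 0 < p) (hq0 : 0 < q) {L : ℝ} (hL : 0 < L)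
    (f : ℝ × (Fin d → ℝ) → ℂ) (hdisc : discNorm d p q (unifP d hL) f < ⊤) :
    ∑' k : ℤ, (∑' j : Fin d → ℤ, cellSup (unifP d hL) f k j ^ q) ^ (p / q) < ⊤ := by
  have hpq : 0 < p / q := div_pos hp0 hq0
  have heq : discNorm d p q (unifP d hL) f
      = ((∑' k : ℤ, (∑' j : Fin d → ℤ, cellSup (unifP d hL) f k j ^ q) ^ (p / q)) *
          ENNReal.ofReal (L ^ (d + 1)) ^ (p / q)) ^ (1 / p) := by
    calc discNorm d p q (unifP d hL) f
        = (∑' k : ℤ, (∑' j : Fin d → ℤ,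
            cellSup (unifP d hL) f k j ^ q * ENNReal.ofReal (L ^ (d + 1))) ^ (p / q)) ^ (1 / p) := by
          rw [discNorm]
          congr 1
          refine tsum_congr fun k => ?_
          congr 1
          refine tsum_congr fun j => ?_
          rw [cellVol_unifP hL k j]
          rfl
      _ = (∑' k : ℤ, ((∑' j : Fin d → ℤ, cellSup (unifP d hL) f k j ^ q) *
            ENNReal.ofReal (L ^ (d + 1))) ^ (p / q)) ^ (1 / p) := by
          congr 1
          refine tsum_congr fun k => ?_
          rw [ENNReal.tsum_mul_right]
      _ = (∑' k : ℤ, (∑' j : Fin d → ℤ, cellSup (unifP d hL) f k j ^ q) ^ (p / q) *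
            ENNReal.ofReal (L ^ (d + 1)) ^ (p / q)) ^ (1 / p) := by
          congr 1
          exact tsum_congr fun k => ENNReal.mul_rpow_of_nonneg _ _ hpq.le
      _ = ((∑' k : ℤ, (∑' j : Fin d → ℤ, cellSup (unifP d hL) f k j ^ q) ^ (p / q)) *
            ENNReal.ofReal (L ^ (d + 1)) ^ (p / q)) ^ (1 / p) := by
          rw [ENNReal.tsum_mul_right]
  rw [heq] at hdisc
  have hfin : (∑' k : ℤ, (∑' j : Fin d → ℤ, cellSup (unifP d hL) f k j ^ q) ^ (p / q)) *
      ENNReal.ofReal (L ^ (d + 1)) ^ (p / q) < ⊤ := by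
    by_contra hc
    rw [not_lt, top_le_iff] at hc
    rw [hc, ENNReal.top_rpow_of_pos (one_div_pos.mpr hp0)] at hdisc
    exact lt_irrefl ⊤ hdisc
  refine ENNReal.lt_top_of_mul_ne_top_left hfin.ne ?_
  exact (ENNReal.rpow_pos (ENNReal.ofReal_pos.mpr (pow_pos hL _)) ENNReal.ofReal_ne_top).ne'

private lemma tau_le {d r : ℕ} {p q : ℝ} (hq0 : 0 < q) (hpq : 0 ≤ p / q) (hp1 : 0 ≤ 1 / p)
    {δ L : ℝ} (hρ : (r : ℝ) * δ / 2 ≤ L) (hL : 0 < L) (f : ℝ × (Fin d → ℝ) → ℂ) :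
    tauModC d r p q f δ ≤
      (∑' k : ℤ, ((∑' j : Fin d → ℤ, nbSum f r hL k j ^ q * (ENNReal.ofReal L) ^ d) ^ (p / q)) *
        ENNReal.ofReal L) ^ (1 / p) := by
  rw [tauModC]
  refine ENNReal.rpow_le_rpow ?_ hp1
  refine le_trans (lintegral_le_cellbound volume _
      (fun k : ℤ => (∑' j : Fin d → ℤ, nbSum f r hL k j ^ q * (ENNReal.ofReal L) ^ d) ^ (p / q))
      (fun k : ℤ => Set.Ico (((k - 1 : ℤ) : ℝ) * L) (((k : ℤ) : ℝ) * L))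
      (fun k => measurableSet_Ico) ?_) ?_
  · intro x
    refine ⟨idx L x, Set.mem_Ico.mpr ⟨idx_left hL x, idx_right hL x⟩, ?_⟩
    refine ENNReal.rpow_le_rpow ?_ hpq
    refine le_trans (lintegral_le_cellbound volume _
        (fun j : Fin d → ℤ => nbSum f r hL (idx L x) j ^ q)
        (fun j : Fin d → ℤ => Set.univ.pi fun i =>
          Set.Ico (((j i - 1 : ℤ) : ℝ) * L) (((j i : ℤ) : ℝ) * L))
        (fun j => MeasurableSet.univ_pi fun i => measurableSet_Ico) ?_) ?_
    · intro y
      refine ⟨fun i => idx L (y i), ?_, ?_⟩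
      · exact Set.mem_univ_pi.mpr fun i =>
          Set.mem_Ico.mpr ⟨idx_left hL (y i), idx_right hL (y i)⟩
      · exact ENNReal.rpow_le_rpow (locModC_le_nbSum r hρ hL f (x, y)) hq0.le
    · refine le_of_eq (tsum_congr fun j => ?_)
      congr 1
      have hv : ∀ i : Fin d,
          volume (Set.Ico (((j i - 1 : ℤ) : ℝ) * L) (((j i : ℤ) : ℝ) * L))
            = ENNReal.ofReal L := by
        intro i
        rw [Real.volume_Ico]
        congr 1
        push_cast
        ring
      rw [MeasureTheory.volume_pi_pi]
      simp only [hv]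
      rw [Finset.prod_const, Finset.card_univ, Fintype.card_fin]
  · refine le_of_eq (tsum_congr fun k => ?_)
    congr 1
    rw [Real.volume_Ico]
    congr 1
    push_cast
    ring

private lemma J_le {d : ℕ} (r : ℕ) {q : ℝ} (hq0 : 0 < q) {L : ℝ} (hL : 0 < L)
    (f : ℝ × (Fin d → ℝ) → ℂ) (k : ℤ) :
    ∑' j : Fin d → ℤ, nbSum f r hL k j ^ q ≤
      ((2 : ℝ≥0∞) ^ r) ^ q * (((Eset ×ˢ EsetPi d).card : ℝ≥0∞) ^ q *
        (((EsetPi d).card : ℝ≥0∞) *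
          ∑ e ∈ Eset, ∑' j : Fin d → ℤ, cellSup (unifP d hL) f (k + e) j ^ q)) := by
  have hshift : ∀ (k' : ℤ) (η : Fin d → ℤ),
      (∑' j : Fin d → ℤ, cellSup (unifP d hL) f k' (fun i => j i + η i) ^ q)
        = ∑' j : Fin d → ℤ, cellSup (unifP d hL) f k' j ^ q := by
    intro k' η
    have h := Equiv.tsum_eq (Equiv.addRight η)
      (fun j : Fin d → ℤ => cellSup (unifP d hL) f k' j ^ q)
    refine Eq.trans ?_ h
    exact tsum_congr fun j => rfl
  have step1 : ∀ j : Fin d → ℤ, nbSum f r hL k j ^ q ≤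
      ((2 : ℝ≥0∞) ^ r) ^ q * (((Eset ×ˢ EsetPi d).card : ℝ≥0∞) ^ q *
        ∑ pe ∈ Eset ×ˢ EsetPi d,
          cellSup (unifP d hL) f (k + pe.1) (fun i => j i + pe.2 i) ^ q) := by
    intro j
    have hps : (∑ e ∈ Eset, ∑ η ∈ EsetPi d,
        cellSup (unifP d hL) f (k + e) (fun i => j i + η i))
        = ∑ pe ∈ Eset ×ˢ EsetPi d,
            cellSup (unifP d hL) f (k + pe.1) (fun i => j i + pe.2 i) :=
      (Finset.sum_product' _ _ _).symm
    simp only [nbSum]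
    rw [ENNReal.mul_rpow_of_nonneg _ _ hq0.le, hps]
    exact mul_le_mul_right (sum_rpow_le _ _ hq0) _
  calc ∑' j : Fin d → ℤ, nbSum f r hL k j ^ q
      ≤ ∑' j : Fin d → ℤ, ((2 : ℝ≥0∞) ^ r) ^ q * (((Eset ×ˢ EsetPi d).card : ℝ≥0∞) ^ q *
          ∑ pe ∈ Eset ×ˢ EsetPi d,
            cellSup (unifP d hL) f (k + pe.1) (fun i => j i + pe.2 i) ^ q) :=
        ENNReal.tsum_le_tsum step1
    _ = ((2 : ℝ≥0∞) ^ r) ^ q * (((Eset ×ˢ EsetPi d).card : ℝ≥0∞) ^ q *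
          ∑' j : Fin d → ℤ, ∑ pe ∈ Eset ×ˢ EsetPi d,
            cellSup (unifP d hL) f (k + pe.1) (fun i => j i + pe.2 i) ^ q) := by
        rw [ENNReal.tsum_mul_left, ENNReal.tsum_mul_left]
    _ = ((2 : ℝ≥0∞) ^ r) ^ q * (((Eset ×ˢ EsetPi d).card : ℝ≥0∞) ^ q *
          ∑ pe ∈ Eset ×ˢ EsetPi d,
            ∑' j : Fin d → ℤ, cellSup (unifP d hL) f (k + pe.1) (fun i => j i + pe.2 i) ^ q) := by
        rw [Summable.tsum_finsetSum (fun _ _ => ENNReal.summable)]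
    _ = ((2 : ℝ≥0∞) ^ r) ^ q * (((Eset ×ˢ EsetPi d).card : ℝ≥0∞) ^ q *
          ∑ pe ∈ Eset ×ˢ EsetPi d,
            ∑' j : Fin d → ℤ, cellSup (unifP d hL) f (k + pe.1) j ^ q) := by
        congr 1
        congr 1
        exact Finset.sum_congr rfl fun pe _ => hshift (k + pe.1) pe.2
    _ = ((2 : ℝ≥0∞) ^ r) ^ q * (((Eset ×ˢ EsetPi d).card : ℝ≥0∞) ^ q *
          (((EsetPi d).card : ℝ≥0∞) *
            ∑ e ∈ Eset, ∑' j : Fin d → ℤ, cellSup (unifP d hL) f (k + e) j ^ q)) := by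
        congr 1
        congr 1
        rw [Finset.sum_product' (f := fun e (_ : Fin d → ℤ) =>
          ∑' j : Fin d → ℤ, cellSup (unifP d hL) f (k + e) j ^ q)]
        rw [Finset.mul_sum]
        refine Finset.sum_congr rfl fun e _ => ?_
        rw [Finset.sum_const, nsmul_eq_mul]

end TauAuxSection3
/-- for `f ∈ Λ^{p,q}`, the averaged modulus of smoothness is finite:
`τ_r(f;δ;ℝ×ℝ^d)_{p,q} < ∞`. -/
theorem tauMod_lt_top_of_memLambda
    (d : ℕ) (hd : 1 ≤ d) (p q : ℝ) (hp : 1 ≤ p) (hq : 1 ≤ q)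
    (r : ℕ) (hr : 1 ≤ r) (δ : ℝ) (hδ : 0 ≤ δ)
    (f : ℝ × (Fin d → ℝ) → ℂ) (hf : MemLambda d p q f) :
    tauModC d r p q f δ < ⊤ := by
  obtain ⟨hfm, hfP⟩ := hf
  have hp0 : (0:ℝ) < p := lt_of_lt_of_le one_pos hp
  have hq0 : (0:ℝ) < q := lt_of_lt_of_le one_pos hq
  have hpq : (0:ℝ) < p / q := div_pos hp0 hq0
  have hrδ : (0:ℝ) ≤ (r:ℝ) * δ := mul_nonneg (Nat.cast_nonneg r) hδ
  have hL : (0:ℝ) < (r:ℝ) * δ + 1 := by linarith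
  have hρ : (r:ℝ) * δ / 2 ≤ (r:ℝ) * δ + 1 := by linarith
  have hU : ∑' k : ℤ, (∑' j : Fin d → ℤ, cellSup (unifP d hL) f k j ^ q) ^ (p / q) < ⊤ :=
    U_lt_top hp0 hq0 hL f (hfP (unifP d hL))
  refine lt_of_le_of_lt (tau_le hq0 hpq.le (one_div_nonneg.mpr hp0.le) hρ hL f) ?_
  refine ENNReal.rpow_lt_top_of_nonneg (one_div_nonneg.mpr hp0.le) ?_
  rw [ENNReal.tsum_mul_right]
  have hK_lt : (ENNReal.ofReal ((r:ℝ) * δ + 1)) ^ d * (((2 : ℝ≥0∞) ^ r) ^ q *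
      (((Eset ×ˢ EsetPi d).card : ℝ≥0∞) ^ q * ((EsetPi d).card : ℝ≥0∞))) < ⊤ := by
    refine ENNReal.mul_lt_top (ENNReal.pow_lt_top ENNReal.ofReal_lt_top)
      (ENNReal.mul_lt_top ?_ (ENNReal.mul_lt_top ?_ (ENNReal.natCast_lt_top _)))
    · exact ENNReal.rpow_lt_top_of_nonneg hq0.le (ENNReal.pow_ne_top ENNReal.ofNat_ne_top)
    · exact ENNReal.rpow_lt_top_of_nonneg hq0.le (ENNReal.natCast_ne_top _)
  have hJk : ∀ k : ℤ, (∑' j : Fin d → ℤ,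
        nbSum f r hL k j ^ q * (ENNReal.ofReal ((r:ℝ) * δ + 1)) ^ d)
      ≤ ((ENNReal.ofReal ((r:ℝ) * δ + 1)) ^ d * (((2 : ℝ≥0∞) ^ r) ^ q *
          (((Eset ×ˢ EsetPi d).card : ℝ≥0∞) ^ q * ((EsetPi d).card : ℝ≥0∞)))) *
        ∑ e ∈ Eset, ∑' j : Fin d → ℤ, cellSup (unifP d hL) f (k + e) j ^ q := by
    intro k
    rw [ENNReal.tsum_mul_right]
    calc (∑' j : Fin d → ℤ, nbSum f r hL k j ^ q) * (ENNReal.ofReal ((r:ℝ) * δ + 1)) ^ d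
        ≤ (((2 : ℝ≥0∞) ^ r) ^ q * (((Eset ×ˢ EsetPi d).card : ℝ≥0∞) ^ q *
            (((EsetPi d).card : ℝ≥0∞) *
              ∑ e ∈ Eset, ∑' j : Fin d → ℤ, cellSup (unifP d hL) f (k + e) j ^ q))) *
            (ENNReal.ofReal ((r:ℝ) * δ + 1)) ^ d :=
          mul_le_mul_left (J_le r hq0 hL f k) _
      _ = _ := by ring
  have hsum : ∑' k : ℤ, (∑' j : Fin d → ℤ,
        nbSum f r hL k j ^ q * (ENNReal.ofReal ((r:ℝ) * δ + 1)) ^ d) ^ (p / q)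
      ≤ (((ENNReal.ofReal ((r:ℝ) * δ + 1)) ^ d * (((2 : ℝ≥0∞) ^ r) ^ q *
          (((Eset ×ˢ EsetPi d).card : ℝ≥0∞) ^ q * ((EsetPi d).card : ℝ≥0∞)))) ^ (p / q)) *
        ((Eset.card : ℝ≥0∞) ^ (p / q) *
          ∑' k : ℤ, ∑ e ∈ Eset, (∑' j : Fin d → ℤ,
            cellSup (unifP d hL) f (k + e) j ^ q) ^ (p / q)) := by
    calc ∑' k : ℤ, (∑' j : Fin d → ℤ,
          nbSum f r hL k j ^ q * (ENNReal.ofReal ((r:ℝ) * δ + 1)) ^ d) ^ (p / q)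
        ≤ ∑' k : ℤ, (((ENNReal.ofReal ((r:ℝ) * δ + 1)) ^ d * (((2 : ℝ≥0∞) ^ r) ^ q *
            (((Eset ×ˢ EsetPi d).card : ℝ≥0∞) ^ q * ((EsetPi d).card : ℝ≥0∞)))) *
            ∑ e ∈ Eset, ∑' j : Fin d → ℤ,
              cellSup (unifP d hL) f (k + e) j ^ q) ^ (p / q) :=
          ENNReal.tsum_le_tsum fun k => ENNReal.rpow_le_rpow (hJk k) hpq.le
      _ = ∑' k : ℤ, ((ENNReal.ofReal ((r:ℝ) * δ + 1)) ^ d * (((2 : ℝ≥0∞) ^ r) ^ q *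
            (((Eset ×ˢ EsetPi d).card : ℝ≥0∞) ^ q * ((EsetPi d).card : ℝ≥0∞)))) ^ (p / q) *
            (∑ e ∈ Eset, ∑' j : Fin d → ℤ,
              cellSup (unifP d hL) f (k + e) j ^ q) ^ (p / q) :=
          tsum_congr fun k => ENNReal.mul_rpow_of_nonneg _ _ hpq.le
      _ ≤ ∑' k : ℤ, ((ENNReal.ofReal ((r:ℝ) * δ + 1)) ^ d * (((2 : ℝ≥0∞) ^ r) ^ q *
            (((Eset ×ˢ EsetPi d).card : ℝ≥0∞) ^ q * ((EsetPi d).card : ℝ≥0∞)))) ^ (p / q) *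
            ((Eset.card : ℝ≥0∞) ^ (p / q) * ∑ e ∈ Eset, (∑' j : Fin d → ℤ,
              cellSup (unifP d hL) f (k + e) j ^ q) ^ (p / q)) :=
          ENNReal.tsum_le_tsum fun k => mul_le_mul_right (sum_rpow_le _ _ hpq) _
      _ = _ := by rw [ENNReal.tsum_mul_left, ENNReal.tsum_mul_left]
  have hswap : (∑' k : ℤ, ∑ e ∈ Eset, (∑' j : Fin d → ℤ,
        cellSup (unifP d hL) f (k + e) j ^ q) ^ (p / q))
      = (Eset.card : ℝ≥0∞) *
        ∑' k : ℤ, (∑' j : Fin d → ℤ, cellSup (unifP d hL) f k j ^ q) ^ (p / q) := by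
    rw [Summable.tsum_finsetSum (fun _ _ => ENNReal.summable)]
    have he : ∀ e ∈ Eset, (∑' k : ℤ, (∑' j : Fin d → ℤ,
          cellSup (unifP d hL) f (k + e) j ^ q) ^ (p / q))
        = ∑' k : ℤ, (∑' j : Fin d → ℤ, cellSup (unifP d hL) f k j ^ q) ^ (p / q) :=
      fun e _ => Equiv.tsum_eq (Equiv.addRight e)
        (fun k => (∑' j : Fin d → ℤ, cellSup (unifP d hL) f k j ^ q) ^ (p / q))
    rw [Finset.sum_congr rfl he, Finset.sum_const, nsmul_eq_mul]
  have hfin : ∑' k : ℤ, (∑' j : Fin d → ℤ,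
      nbSum f r hL k j ^ q * (ENNReal.ofReal ((r:ℝ) * δ + 1)) ^ d) ^ (p / q) < ⊤ := by
    refine lt_of_le_of_lt hsum ?_
    rw [hswap]
    exact ENNReal.mul_lt_top (ENNReal.rpow_lt_top_of_nonneg hpq.le hK_lt.ne)
      (ENNReal.mul_lt_top (ENNReal.rpow_lt_top_of_nonneg hpq.le (ENNReal.natCast_ne_top _))
        (ENNReal.mul_lt_top (ENNReal.natCast_lt_top _) hU))
  exact (ENNReal.mul_lt_top hfin ENNReal.ofReal_lt_top).ne
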